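/- Assume conditions (A2)–(A4), and let the process Φ have an initial distribution ν (a Borel probability measure on X) satisfying sup_{t≥0} ∫_X V^ζ d(νP_t) < ∞ (this holds in particular for ν = μ and for ν = μ_*). Then for every t ≥ 0 the martingale part M_t(g) = χ_g(Φ_t) − χ_g(Φ_0) + ∫_0^t g(Φ_s) ds satisfies E_ν[|M_t(g)|^ζ] < ∞; in particular E_{μ_*}[M_1(g)²] < ∞. -/

import Mathlib

open MeasureTheory Filter Set
open scoped ENNReal Topology NNReal

noncomputable section

variable {X : Type*} [MetricSpace X] [CompleteSpace X] [SecondCountableTopology X]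
  [MeasurableSpace X] [BorelSpace X]

/-- Action of a transition kernel family on measures: `ν ↦ ν P_t`. -/
def measAct (P : ℝ → X → Measure X) (t : ℝ) (ν : Measure X) : Measure X :=
  ν.bind (P t)

/-- Dual action of the semigroup on functions: `f ↦ P_t f`. -/
def funAct (P : ℝ → X → Measure X) (t : ℝ) (f : X → ℝ) (x : X) : ℝ :=
  ∫ y, f y ∂(P t x)

/-- A Borel (probability) measure has a finite first moment. -/
def FiniteFirstMoment (ν : Measure X) : Prop :=
  ∀ x₀ : X, Integrable (fun x => dist x₀ x) ν

/-- The Wasserstein (Kantorovich–Rubinstein) distance `d_W`. -/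
def wassDist (μ ν : Measure X) : ℝ :=
  sSup {r | ∃ f : X → ℝ, LipschitzWith 1 f ∧ r = |(∫ x, f x ∂μ) - ∫ x, f x ∂ν|}

/-- A Markov semigroup `{P_t}_{t ≥ 0}` of probability kernels on `X`. -/
structure IsMarkovSemigroup (P : ℝ → X → Measure X) : Prop where
  prob : ∀ t, 0 ≤ t → ∀ x, IsProbabilityMeasure (P t x)
  jointMeas : ∀ A : Set X, MeasurableSet A → Measurable fun p : ℝ × X => P p.1 p.2 A
  init : ∀ x, P 0 x = Measure.dirac x
  chapman : ∀ s t, 0 ≤ s → 0 ≤ t → ∀ x, P (s + t) x = (P s x).bind (P t)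

/-- Condition (A1): stochastic continuity of the semigroup. -/
def CondA1 (P : ℝ → X → Measure X) : Prop :=
  ∀ f : X → ℝ, Continuous f → (∃ C, ∀ x, |f x| ≤ C) →
    ∀ x : X, Tendsto (fun t => funAct P t f x) (𝓝[>] (0 : ℝ)) (𝓝 (f x))

/-- Condition (A2): the Feller property. -/
def CondA2 (P : ℝ → X → Measure X) : Prop :=
  ∀ f : X → ℝ, Continuous f → (∃ C, ∀ x, |f x| ≤ C) → ∀ t, 0 ≤ t →
    Continuous (funAct P t f) ∧ ∃ C, ∀ x, |funAct P t f x| ≤ C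

/-- Condition (A3): preservation of finite first moments and exponential
contractivity in the Wasserstein distance, with rate `γ`. -/
def CondA3 (P : ℝ → X → Measure X) (γ : ℝ) : Prop :=
  (∀ ν : Measure X, IsProbabilityMeasure ν → FiniteFirstMoment ν →
    ∀ t, 0 < t → FiniteFirstMoment (measAct P t ν)) ∧
  0 < γ ∧
  ∀ t, 0 ≤ t → ∀ x y : X,
    wassDist (P t x) (P t y) ≤ Real.exp (-γ * t) * dist x y

/-- Condition (A4): a uniform-in-time moment bound of order `ζ > 2` for the initial
distribution `μ`, along the semigroup. -/
def CondA4 (P : ℝ → X → Measure X) (μ : Measure X) (x₀ : X) (ζ : ℝ) : Prop :=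
  2 < ζ ∧ ∃ M : ℝ, ∀ t, 0 ≤ t →
    (∫⁻ x, ENNReal.ofReal (dist x₀ x ^ ζ) ∂(measAct P t μ)) ≤ ENNReal.ofReal M

variable {Ω : Type*} [MeasurableSpace Ω]

/-- The natural filtration of the process `Φ`. -/
def natFiltration (Φ : ℝ → Ω → X) (s : ℝ) : MeasurableSpace Ω :=
  ⨆ u ∈ Set.Icc (0 : ℝ) s, MeasurableSpace.comap (Φ u) inferInstance

/-- A (progressively measurable) time-homogeneous Markov process with state space `X`,
transition semigroup `P` and initial distribution `μ`, realized on `(Ω, ℙ)`. -/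
structure IsMarkovProcess (P : ℝ → X → Measure X) (Φ : ℝ → Ω → X)
    (ℙ : Measure Ω) (μ : Measure X) : Prop where
  jointMeas : Measurable fun p : ℝ × Ω => Φ p.1 p.2
  init : ℙ.map (Φ 0) = μ
  law : ∀ t, 0 ≤ t → ℙ.map (Φ t) = measAct P t μ
  markov : ∀ f : X → ℝ, Measurable f → (∃ C, ∀ x, |f x| ≤ C) →
    ∀ s t : ℝ, 0 ≤ s → 0 ≤ t →
      (fun ω => funAct P t f (Φ s ω)) =ᵐ[ℙ]
        ℙ[(fun ω => f (Φ (s + t) ω)) | natFiltration Φ s]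

/-- A Markov process together with a measurable family of laws `{ℙ_x}_{x ∈ X}`,
with `ℙ_x(Φ_0 = x) = 1`. -/
structure IsMarkovFamily (P : ℝ → X → Measure X) (Φ : ℝ → Ω → X)
    (ℙ : X → Measure Ω) : Prop where
  prob : ∀ x, IsProbabilityMeasure (ℙ x)
  jointMeas : Measurable fun p : ℝ × Ω => Φ p.1 p.2
  measFam : ∀ s : Set Ω, MeasurableSet s → Measurable fun x => ℙ x s
  start : ∀ x, (ℙ x) {ω | Φ 0 ω = x} = 1
  law : ∀ x, ∀ t, 0 ≤ t → (ℙ x).map (Φ t) = P t x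
  markov : ∀ x : X, ∀ f : X → ℝ, Measurable f → (∃ C, ∀ z, |f z| ≤ C) →
    ∀ s t : ℝ, 0 ≤ s → 0 ≤ t →
      (fun ω => funAct P t f (Φ s ω)) =ᵐ[ℙ x]
        (ℙ x)[(fun ω => f (Φ (s + t) ω)) | natFiltration Φ s]

/-- The corrector function `χ_g(x) = ∫_0^∞ (P_t g)(x) dt`. -/
def corrector (P : ℝ → X → Measure X) (g : X → ℝ) (x : X) : ℝ :=
  ∫ t in Set.Ioi (0 : ℝ), funAct P t g x

/-- The additive functional `I_t(g) = ∫_0^t g(Φ_s) ds`. -/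
def addFun (g : X → ℝ) (Φ : ℝ → Ω → X) (t : ℝ) (ω : Ω) : ℝ :=
  ∫ s in (0 : ℝ)..t, g (Φ s ω)

/-- The martingale part `M_t(g) = χ_g(Φ_t) - χ_g(Φ_0) + I_t(g)`. -/
def mart (P : ℝ → X → Measure X) (g : X → ℝ) (Φ : ℝ → Ω → X) (t : ℝ) (ω : Ω) : ℝ :=
  corrector P g (Φ t ω) - corrector P g (Φ 0 ω) + addFun g Φ t ω

/-- The martingale increments `Z_n(g) = M_n(g) - M_{n-1}(g)`. -/
def incr (P : ℝ → X → Measure X) (g : X → ℝ) (Φ : ℝ → Ω → X) (n : ℕ) (ω : Ω) : ℝ :=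
  mart P g Φ (n : ℝ) ω - mart P g Φ ((n : ℝ) - 1) ω

/-- Truncation `a ∧ p` for `p ∈ ℕ ∪ {∞}`, with the convention `a ∧ ∞ = a`. -/
def truncMin (a : ℝ) (p : ℕ∞) : ℝ :=
  if p = ⊤ then a else min a (p.toNat : ℝ)

/-!
By the contraction (A3), `P_t g` is `K e^{-γt}`-Lipschitz, and `∫ P_t g dμ⋆ = ∫ g dμ⋆ = 0`, so
`|P_t g x| ≤ K e^{-γt} (V x + ∫ V dμ⋆)` and `|χ_g| ≤ (K / γ) (V + ∫ V dμ⋆)`. The first moment of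
`μ⋆` is finite: comparing `μ⋆ = μ⋆ P_t` and `ν P_t` with `δ_{x₀} P_t` on truncations of `V` and
letting `t → ∞` bounds it by `sup_t ∫ V d(ν P_t)`. Hence `χ_g(Φ_t)` and `χ_g(Φ_0)` are dominated by
affine functions of `V(Φ_t)` and `V(Φ_0)`, which lie in `L^ζ(ℙ_ν)` by the moment assumption on `ν`,
while `|∫_0^t g(Φ_s) ds| ≤ t sup |g|`. So `M_t(g) ∈ L^ζ ⊆ L²`, as `ζ > 2`.
-/

section General

variable {α : Type*} [MeasurableSpace α]

theorem abs_integral_sub_le_of_abs_sub_le {m : Measure α} [IsProbabilityMeasure m]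
    {u h : α → ℝ} (hu : Integrable u m) (hh : Integrable h m) (z : α)
    (huh : ∀ x, |u x - u z| ≤ h x) :
    |∫ x, u x ∂m - u z| ≤ ∫ x, h x ∂m := by
  have hsub : ∫ x, u x ∂m - u z = ∫ x, (u x - u z) ∂m := by
    rw [integral_sub hu (integrable_const _), integral_const, probReal_univ, one_smul]
  rw [hsub]
  exact norm_integral_le_of_norm_le hh
    (ae_of_all _ fun x => (Real.norm_eq_abs _).trans_le (huh x))

theorem lintegral_ofReal_le_one_add_lintegral_rpow {m : Measure α} [IsProbabilityMeasure m]
    {f : α → ℝ} {ζ : ℝ} (hζ : 1 ≤ ζ) :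
    ∫⁻ x, ENNReal.ofReal (f x) ∂m ≤ 1 + ∫⁻ x, ENNReal.ofReal (f x ^ ζ) ∂m := by
  calc ∫⁻ x, ENNReal.ofReal (f x) ∂m ≤ ∫⁻ x, (1 + ENNReal.ofReal (f x ^ ζ)) ∂m := by
        refine lintegral_mono fun x => ?_
        rcases le_total (f x) 1 with h | h
        · exact (ENNReal.ofReal_le_one.2 h).trans le_self_add
        · exact (ENNReal.ofReal_le_ofReal (Real.self_le_rpow_of_one_le h hζ)).trans le_add_self
    _ = 1 + ∫⁻ x, ENNReal.ofReal (f x ^ ζ) ∂m := by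
        rw [lintegral_add_left measurable_const, lintegral_const, measure_univ, mul_one]

theorem lintegral_ofReal_le_of_forall_min_natCast_le {m : Measure α} {f : α → ℝ}
    (hf : Measurable f) {B : ℝ≥0∞} (h : ∀ R : ℕ, ∫⁻ x, ENNReal.ofReal (min (f x) R) ∂m ≤ B) :
    ∫⁻ x, ENNReal.ofReal (f x) ∂m ≤ B := by
  have hsup x : ENNReal.ofReal (f x) = ⨆ R : ℕ, ENNReal.ofReal (min (f x) R) :=
    le_antisymm (le_iSup_of_le ⌈f x⌉₊ (by rw [min_eq_left (Nat.le_ceil _)]))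
      (iSup_le fun R => ENNReal.ofReal_le_ofReal (min_le_left _ _))
  simp_rw [hsup]
  rw [lintegral_iSup (fun R => (hf.min measurable_const).ennreal_ofReal)
    fun R R' hR x => ENNReal.ofReal_le_ofReal (min_le_min_left _ (Nat.cast_le.2 hR))]
  exact iSup_le h

theorem memLp_ofReal_of_lintegral_rpow_ne_top {m : Measure α} {f : α → ℝ}
    (hf : AEStronglyMeasurable f m) (hf0 : ∀ x, 0 ≤ f x) {ζ : ℝ} (hζ : 0 < ζ)
    (h : ∫⁻ x, ENNReal.ofReal (f x ^ ζ) ∂m ≠ ∞) : MemLp f (ENNReal.ofReal ζ) m := by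
  rw [← integrable_norm_rpow_iff hf (ENNReal.ofReal_pos.2 hζ).ne' ENNReal.ofReal_ne_top,
    ENNReal.toReal_ofReal hζ.le, ← lintegral_ofReal_ne_top_iff_integrable
      (hf.norm.aemeasurable.pow_const ζ).aestronglyMeasurable
      (ae_of_all _ fun x => by positivity)]
  simpa [abs_of_nonneg (hf0 _)] using h

end General

theorem MeasureTheory.MemLp.comp_of_abs_le_mul_dist_add {α E : Type*} [MeasurableSpace α]
    [MetricSpace E] [MeasurableSpace E] {m : Measure α} [IsFiniteMeasure m] {f : E → ℝ}
    (hf : Measurable f) {Y : α → E} (hY : Measurable Y) {x₀ : E} {a b : ℝ}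
    (hfab : ∀ x, |f x| ≤ a * dist x₀ x + b)
    {p : ℝ≥0∞} (hV : MemLp (fun ω => dist x₀ (Y ω)) p m) : MemLp (fun ω => f (Y ω)) p m :=
  ((hV.const_mul a).add (memLp_const b)).of_le (hf.comp hY).aestronglyMeasurable
    (ae_of_all _ fun ω => (hfab (Y ω)).trans (le_abs_self _))

theorem tendsto_integral_min_exp_mul_dist {E : Type*} [MetricSpace E] [MeasurableSpace E]
    [BorelSpace E] {γ : ℝ} (hγ : 0 < γ) (x₀ : E) (m : Measure E) [IsFiniteMeasure m] {a : ℝ}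
    (ha : 0 ≤ a) :
    Tendsto (fun t => ∫ x, min a (Real.exp (-γ * t) * dist x₀ x) ∂m) atTop (𝓝 0) := by
  have hexp : Tendsto (fun t => Real.exp (-γ * t)) atTop (𝓝 0) :=
    Real.tendsto_exp_atBot.comp (tendsto_id.const_mul_atTop_of_neg (neg_lt_zero.2 hγ))
  simpa [ha] using tendsto_integral_filter_of_dominated_convergence
    (F := fun t x => min a (Real.exp (-γ * t) * dist x₀ x)) (fun _ => a)
    (Eventually.of_forall fun t => (continuous_const.min
      (continuous_const.mul (continuous_const.dist continuous_id))).aestronglyMeasurable)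
    (Eventually.of_forall fun t => ae_of_all _ fun x => by
      rw [Real.norm_eq_abs, abs_of_nonneg (le_min ha (by positivity))]
      exact min_le_left _ _)
    (integrable_const a)
    (ae_of_all _ fun x => tendsto_const_nhds.min (hexp.mul_const (dist x₀ x)))

section Wasserstein

variable {E : Type*} [MetricSpace E] [MeasurableSpace E] [BorelSpace E]

theorem finiteFirstMoment_dirac (x : E) : FiniteFirstMoment (Measure.dirac x) := fun _ =>
  integrable_dirac' (continuous_const.dist continuous_id).stronglyMeasurable enorm_lt_top

theorem LipschitzWith.integrable_of_finiteFirstMoment {f : E → ℝ} {K : ℝ≥0}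
    (hf : LipschitzWith K f) {m : Measure E} [IsFiniteMeasure m] (hm : FiniteFirstMoment m)
    (z : E) : Integrable f m := by
  refine ((integrable_const |f z|).add ((hm z).const_mul K)).mono'
    hf.continuous.aestronglyMeasurable (ae_of_all _ fun y => ?_)
  have := hf.dist_le_mul y z
  rw [Real.dist_eq, dist_comm] at this
  simp only [Real.norm_eq_abs, Pi.add_apply]
  linarith [abs_sub_abs_le_abs_sub (f y) (f z)]

theorem LipschitzWith.abs_integral_sub_le {f : E → ℝ} {K : ℝ≥0} (hf : LipschitzWith K f)
    {m : Measure E} [IsProbabilityMeasure m] (hm : FiniteFirstMoment m) (z : E) :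
    |∫ x, f x ∂m - f z| ≤ K * ∫ x, dist z x ∂m := by
  rw [← integral_const_mul]
  refine abs_integral_sub_le_of_abs_sub_le (hf.integrable_of_finiteFirstMoment hm z)
    ((hm z).const_mul _) z fun x => ?_
  rw [← Real.dist_eq, dist_comm z x]
  exact hf.dist_le_mul x z

theorem LipschitzWith.abs_integral_sub_le_mul_wassDist {f : E → ℝ} {K : ℝ≥0}
    (hf : LipschitzWith K f) {m₁ m₂ : Measure E} [IsProbabilityMeasure m₁]
    [IsProbabilityMeasure m₂] (h₁ : FiniteFirstMoment m₁) (h₂ : FiniteFirstMoment m₂) :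
    |∫ x, f x ∂m₁ - ∫ x, f x ∂m₂| ≤ K * wassDist m₁ m₂ := by
  obtain ⟨z⟩ : Nonempty E := ⟨(MeasureTheory.nonempty_of_isProbabilityMeasure m₁).some⟩
  rcases eq_or_ne K 0 with rfl | hK
  · have hconst : f = fun _ => f z :=
      funext fun x => dist_le_zero.1 (by simpa using hf.dist_le_mul x z)
    rw [hconst]
    simp
  have hbdd : BddAbove {r | ∃ u : E → ℝ, LipschitzWith 1 u ∧
      r = |∫ x, u x ∂m₁ - ∫ x, u x ∂m₂|} := by
    refine ⟨∫ x, dist z x ∂m₁ + ∫ x, dist z x ∂m₂, ?_⟩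
    rintro r ⟨u, hu, rfl⟩
    have e₁ := hu.abs_integral_sub_le h₁ z
    have e₂ := hu.abs_integral_sub_le h₂ z
    simp only [NNReal.coe_one, one_mul] at e₁ e₂
    calc |∫ x, u x ∂m₁ - ∫ x, u x ∂m₂|
        = |(∫ x, u x ∂m₁ - u z) - (∫ x, u x ∂m₂ - u z)| := by ring_nf
      _ ≤ _ := (abs_sub _ _).trans (add_le_add e₁ e₂)
  have hscaled : LipschitzWith 1 fun x => (K : ℝ)⁻¹ * f x := by
    refine LipschitzWith.of_dist_le_mul fun x y => ?_
    rw [Real.dist_eq, ← mul_sub, abs_mul, abs_inv, NNReal.abs_eq, NNReal.coe_one, one_mul,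
      inv_mul_le_iff₀ (by positivity), ← Real.dist_eq]
    exact hf.dist_le_mul x y
  have hle := le_csSup hbdd ⟨_, hscaled, rfl⟩
  rw [integral_const_mul, integral_const_mul, ← mul_sub, abs_mul,
    abs_of_nonneg (by positivity)] at hle
  rwa [← inv_mul_le_iff₀ (by positivity)]

end Wasserstein

theorem measurable_addFun {α E : Type*} [MeasurableSpace α] [MeasurableSpace E]
    {Φ : ℝ → α → E} (hΦ : Measurable fun p : ℝ × α => Φ p.1 p.2) {g : E → ℝ}
    (hg : Measurable g) (t : ℝ) : Measurable (addFun g Φ t) := by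
  have hF : StronglyMeasurable fun q : α × ℝ => g (Φ q.2 q.1) :=
    (hg.comp (hΦ.comp measurable_swap)).stronglyMeasurable
  -- `∫ s in 0..t` unfolds to `∫ s in Ioc 0 t - ∫ s in Ioc t 0`, whatever the sign of `t`.
  exact (hF.integral_prod_right' (ν := volume.restrict (Ioc 0 t))).measurable.sub
    (hF.integral_prod_right' (ν := volume.restrict (Ioc t 0))).measurable

theorem abs_addFun_le {α E : Type*} {Φ : ℝ → α → E} {g : E → ℝ} {C : ℝ}
    (hg : ∀ x, |g x| ≤ C) (t : ℝ) (ω : α) : |addFun g Φ t ω| ≤ C * |t| := by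
  simpa [addFun] using intervalIntegral.norm_integral_le_of_norm_le_const (a := 0) (b := t)
    fun s _ => (Real.norm_eq_abs _).trans_le (hg (Φ s ω))

theorem abs_corrector_le_of_abs_funAct_le {E : Type*} [MeasurableSpace E]
    {P : ℝ → E → Measure E} {g : E → ℝ} {x : E} {γ c : ℝ} (hγ : 0 < γ)
    (h : ∀ t, 0 ≤ t → |funAct P t g x| ≤ c * Real.exp (-γ * t)) :
    |corrector P g x| ≤ c / γ := by
  have hint : IntegrableOn (fun t => c * Real.exp (-γ * t)) (Ioi 0) :=
    (integrableOn_exp_mul_Ioi (neg_lt_zero.2 hγ) 0).const_mul c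
  calc |corrector P g x| = ‖∫ t in Ioi 0, funAct P t g x‖ := (Real.norm_eq_abs _).symm
    _ ≤ ∫ t in Ioi 0, c * Real.exp (-γ * t) :=
        norm_integral_le_of_norm_le hint ((ae_restrict_iff' measurableSet_Ioi).2
          (ae_of_all _ fun t ht => (Real.norm_eq_abs _).trans_le (h t (le_of_lt ht))))
    _ = c / γ := by
        rw [integral_const_mul, integral_exp_mul_Ioi (neg_lt_zero.2 hγ)]
        field_simp
        simp

namespace IsMarkovSemigroup

variable {E : Type*} [MeasurableSpace E] {P : ℝ → E → Measure E}

theorem measurable_uncurry_swap (hP : IsMarkovSemigroup P) :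
    Measurable fun q : E × ℝ => P q.2 q.1 :=
  Measure.measurable_of_measurable_coe _ fun s hs => (hP.jointMeas s hs).comp measurable_swap

def jointKernel (hP : IsMarkovSemigroup P) : ProbabilityTheory.Kernel (E × ℝ) E :=
  ⟨fun q => P q.2 q.1, hP.measurable_uncurry_swap⟩

protected theorem measurable (hP : IsMarkovSemigroup P) (t : ℝ) : Measurable (P t) :=
  hP.measurable_uncurry_swap.comp (measurable_id.prodMk measurable_const)

def kernel (hP : IsMarkovSemigroup P) (t : ℝ) : ProbabilityTheory.Kernel E E :=
  ⟨P t, hP.measurable t⟩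

theorem stronglyMeasurable_funAct_uncurry (hP : IsMarkovSemigroup P) {f : E → ℝ}
    (hf : StronglyMeasurable f) :
    StronglyMeasurable fun q : E × ℝ => funAct P q.2 f q.1 :=
  hf.integral_kernel (κ := hP.jointKernel)

theorem measurable_funAct (hP : IsMarkovSemigroup P) {f : E → ℝ} (hf : StronglyMeasurable f)
    (t : ℝ) : Measurable (funAct P t f) :=
  (hf.integral_kernel (κ := hP.kernel t)).measurable

theorem abs_funAct_le (hP : IsMarkovSemigroup P) {t : ℝ} (ht : 0 ≤ t) {f : E → ℝ} {C : ℝ}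
    (hf : ∀ x, |f x| ≤ C) (x : E) : |funAct P t f x| ≤ C := by
  have := hP.prob t ht x
  simpa [funAct] using norm_integral_le_of_norm_le_const (μ := P t x)
    (ae_of_all _ fun y => (Real.norm_eq_abs (f y)).trans_le (hf y))

theorem integrable_funAct (hP : IsMarkovSemigroup P) {t : ℝ} (ht : 0 ≤ t) {f : E → ℝ}
    (hf : StronglyMeasurable f) {C : ℝ} (hfC : ∀ x, |f x| ≤ C) (m : Measure E)
    [IsFiniteMeasure m] : Integrable (funAct P t f) m :=
  .of_bound (hP.measurable_funAct hf t).aestronglyMeasurable C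
    (ae_of_all _ (hP.abs_funAct_le ht hfC))

theorem isProbabilityMeasure_measAct (hP : IsMarkovSemigroup P) {t : ℝ} (ht : 0 ≤ t)
    (ν : Measure E) [IsProbabilityMeasure ν] : IsProbabilityMeasure (measAct P t ν) :=
  ⟨by
    have hprob x : P t x univ = 1 := (hP.prob t ht x).measure_univ
    rw [measAct, Measure.bind_apply MeasurableSet.univ (hP.measurable t).aemeasurable]
    simp [hprob]⟩

open ProbabilityTheory in
theorem integral_measAct (hP : IsMarkovSemigroup P) (t : ℝ) (ν : Measure E) {f : E → ℝ}
    (hf : Integrable f (measAct P t ν)) :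
    ∫ x, f x ∂(measAct P t ν) = ∫ x, funAct P t f x ∂ν := by
  change Integrable f (hP.kernel t ∘ₘ ν) at hf
  change ∫ x, f x ∂(hP.kernel t ∘ₘ ν) = _
  rw [Measure.comp_eq_comp_const_apply] at hf ⊢
  rw [Kernel.integral_comp hf]
  rfl

theorem integral_funAct_of_invariant (hP : IsMarkovSemigroup P) {μstar : Measure E}
    (hinv : ∀ t, 0 ≤ t → measAct P t μstar = μstar) {t : ℝ} (ht : 0 ≤ t) {f : E → ℝ}
    (hf : Integrable f μstar) : ∫ x, funAct P t f x ∂μstar = ∫ x, f x ∂μstar := by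
  rw [← hP.integral_measAct t μstar (by rwa [hinv t ht]), hinv t ht]

theorem measurable_corrector (hP : IsMarkovSemigroup P) {g : E → ℝ}
    (hg : StronglyMeasurable g) : Measurable (corrector P g) :=
  (hP.stronglyMeasurable_funAct_uncurry hg).integral_prod_right'.measurable

section Contraction

variable [MetricSpace E] [BorelSpace E] {γ : ℝ}

theorem finiteFirstMoment (hP : IsMarkovSemigroup P) (hA3 : CondA3 P γ) {t : ℝ} (ht : 0 ≤ t)
    (x : E) : FiniteFirstMoment (P t x) := by
  rcases ht.eq_or_lt with rfl | ht
  · rw [hP.init]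
    exact finiteFirstMoment_dirac x
  · simpa [measAct, Measure.dirac_bind (hP.measurable t)] using
      hA3.1 _ inferInstance (finiteFirstMoment_dirac x) t ht

theorem lipschitzWith_funAct (hP : IsMarkovSemigroup P) (hA3 : CondA3 P γ) {g : E → ℝ}
    {K : ℝ≥0} (hg : LipschitzWith K g) {t : ℝ} (ht : 0 ≤ t) :
    LipschitzWith (K * (Real.exp (-γ * t)).toNNReal) (funAct P t g) := by
  refine LipschitzWith.of_dist_le_mul fun x y => ?_
  have := hP.prob t ht x
  have := hP.prob t ht y
  rw [Real.dist_eq, NNReal.coe_mul, Real.coe_toNNReal _ (Real.exp_pos _).le, mul_assoc]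
  exact (hg.abs_integral_sub_le_mul_wassDist (hP.finiteFirstMoment hA3 ht x)
    (hP.finiteFirstMoment hA3 ht y)).trans (mul_le_mul_of_nonneg_left (hA3.2.2 t ht x y) K.2)

theorem abs_funAct_le_of_invariant (hP : IsMarkovSemigroup P) (hA3 : CondA3 P γ)
    {μstar : Measure E} [IsProbabilityMeasure μstar]
    (hinv : ∀ t, 0 ≤ t → measAct P t μstar = μstar) {g : E → ℝ} {K : ℝ≥0}
    (hg : LipschitzWith K g) {C : ℝ} (hgC : ∀ x, |g x| ≤ C) (hmean : ∫ x, g x ∂μstar = 0)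
    {x₀ : E} (hV : Integrable (dist x₀ ·) μstar) {t : ℝ} (ht : 0 ≤ t) (x : E) :
    |funAct P t g x| ≤ K * Real.exp (-γ * t) * (dist x₀ x + ∫ y, dist x₀ y ∂μstar) := by
  have hgm := hg.continuous.stronglyMeasurable
  have hzero : ∫ y, funAct P t g y ∂μstar = 0 := by
    rw [hP.integral_funAct_of_invariant hinv ht
      (.of_bound hgm.aestronglyMeasurable C (ae_of_all _ hgC)), hmean]
  have hLip := hP.lipschitzWith_funAct hA3 hg ht
  have key := abs_integral_sub_le_of_abs_sub_le
    (h := fun y => K * Real.exp (-γ * t) * (dist x₀ x + dist x₀ y))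
    (hP.integrable_funAct ht hgm hgC μstar) (((integrable_const _).add hV).const_mul _) x
    fun y => by
      have hy := hLip.dist_le_mul y x
      rw [NNReal.coe_mul, Real.coe_toNNReal _ (Real.exp_pos _).le, Real.dist_eq] at hy
      refine hy.trans (mul_le_mul_of_nonneg_left ?_ (by positivity))
      linarith [dist_triangle y x₀ x, dist_comm y x₀, dist_comm x₀ x]
  rwa [hzero, zero_sub, abs_neg, integral_const_mul, integral_add (integrable_const _) hV,
    integral_const, probReal_univ, one_smul] at key

/-- The cap `2 * R` keeps the error terms integrable while the first moment of `μstar` is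
still unknown. -/
theorem integral_le_integral_measAct_add (hP : IsMarkovSemigroup P) (hA3 : CondA3 P γ)
    {μstar : Measure E} [IsProbabilityMeasure μstar]
    (hinv : ∀ t, 0 ≤ t → measAct P t μstar = μstar) (ν : Measure E) [IsProbabilityMeasure ν]
    {f : E → ℝ} (hf : LipschitzWith 1 f) {R : ℝ} (hfR : ∀ x, |f x| ≤ R) (x₀ : E) {t : ℝ}
    (ht : 0 ≤ t) :
    ∫ x, f x ∂μstar ≤ ∫ x, f x ∂(measAct P t ν) +
      (∫ x, min (2 * R) (Real.exp (-γ * t) * dist x₀ x) ∂μstar +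
        ∫ x, min (2 * R) (Real.exp (-γ * t) * dist x₀ x) ∂ν) := by
  have := hP.isProbabilityMeasure_measAct ht ν
  have hfm := hf.continuous.stronglyMeasurable
  have hfint (m : Measure E) [IsFiniteMeasure m] : Integrable f m :=
    .of_bound hfm.aestronglyMeasurable R (ae_of_all _ hfR)
  have herr (m : Measure E) [IsFiniteMeasure m] :
      Integrable (fun x => min (2 * R) (Real.exp (-γ * t) * dist x₀ x)) m :=
    .of_bound (continuous_const.min (continuous_const.mul
      (continuous_const.dist continuous_id))).aestronglyMeasurable (2 * R)
      (ae_of_all _ fun x => by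
        have hR : 0 ≤ R := (abs_nonneg _).trans (hfR x₀)
        rw [Real.norm_eq_abs, abs_of_nonneg (le_min (by positivity) (by positivity))]
        exact min_le_left _ _)
  have hLip := hP.lipschitzWith_funAct hA3 hf ht
  have hclose x : |funAct P t f x - funAct P t f x₀| ≤
      min (2 * R) (Real.exp (-γ * t) * dist x₀ x) := by
    refine le_min ?_ ?_
    · linarith [abs_sub (funAct P t f x) (funAct P t f x₀), hP.abs_funAct_le ht hfR x,
        hP.abs_funAct_le ht hfR x₀]
    · have := hLip.dist_le_mul x x₀
      rwa [one_mul, Real.coe_toNNReal _ (Real.exp_pos _).le, Real.dist_eq, dist_comm] at this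
  have hμ := abs_integral_sub_le_of_abs_sub_le
    (hP.integrable_funAct ht hfm hfR μstar) (herr μstar) x₀ hclose
  have hν := abs_integral_sub_le_of_abs_sub_le
    (hP.integrable_funAct ht hfm hfR ν) (herr ν) x₀ hclose
  rw [← hP.integral_funAct_of_invariant hinv ht (hfint μstar),
    hP.integral_measAct t ν (hfint _)]
  linarith [abs_le.1 hμ, abs_le.1 hν]

theorem lintegral_dist_le_of_invariant (hP : IsMarkovSemigroup P) (hA3 : CondA3 P γ)
    {μstar : Measure E} [IsProbabilityMeasure μstar]
    (hinv : ∀ t, 0 ≤ t → measAct P t μstar = μstar) (ν : Measure E) [IsProbabilityMeasure ν]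
    (x₀ : E) {B : ℝ≥0∞}
    (hB : ∀ t, 0 ≤ t → ∫⁻ x, ENNReal.ofReal (dist x₀ x) ∂(measAct P t ν) ≤ B) :
    ∫⁻ x, ENNReal.ofReal (dist x₀ x) ∂μstar ≤ B := by
  refine lintegral_ofReal_le_of_forall_min_natCast_le (f := dist x₀)
    (continuous_const.dist continuous_id).measurable fun R => ?_
  set f : E → ℝ := fun x => min (dist x₀ x) R
  have hf0 x : 0 ≤ f x := le_min dist_nonneg R.cast_nonneg
  have hfR x : |f x| ≤ R := (abs_of_nonneg (hf0 x)).trans_le (min_le_right _ _)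
  have hfint (m : Measure E) [IsFiniteMeasure m] : Integrable f m :=
    .of_bound ((continuous_const.dist continuous_id).min continuous_const).aestronglyMeasurable
      R (ae_of_all _ hfR)
  have hνt t (ht : 0 ≤ t) : ENNReal.ofReal (∫ x, f x ∂(measAct P t ν)) ≤ B := by
    have := hP.isProbabilityMeasure_measAct ht ν
    rw [ofReal_integral_eq_lintegral_ofReal (hfint _) (ae_of_all _ hf0)]
    exact (lintegral_mono fun x => ENNReal.ofReal_le_ofReal (min_le_left _ _)).trans (hB t ht)
  have herr := ((tendsto_integral_min_exp_mul_dist hA3.2.1 x₀ μstar (a := 2 * R)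
    (by positivity)).add (tendsto_integral_min_exp_mul_dist hA3.2.1 x₀ ν (a := 2 * R)
    (by positivity))).const_sub (∫ x, f x ∂μstar)
  rw [add_zero, sub_zero] at herr
  rw [← ofReal_integral_eq_lintegral_ofReal (hfint _) (ae_of_all _ hf0)]
  refine le_of_tendsto ((ENNReal.continuous_ofReal.tendsto _).comp herr)
    (eventually_atTop.2 ⟨0, fun t ht => (ENNReal.ofReal_le_ofReal ?_).trans (hνt t ht)⟩)
  have := hP.integral_le_integral_measAct_add hA3 hinv ν
    ((LipschitzWith.dist_right x₀).min_const (R : ℝ)) hfR x₀ ht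
  linarith

theorem integrable_dist_of_invariant (hP : IsMarkovSemigroup P) (hA3 : CondA3 P γ)
    {μstar : Measure E} [IsProbabilityMeasure μstar] (hinv : ∀ t, 0 ≤ t → measAct P t μstar = μstar)
    (ν : Measure E) [IsProbabilityMeasure ν] {x₀ : E} {ζ M : ℝ} (hζ : 1 ≤ ζ)
    (hM : ∀ t, 0 ≤ t →
      ∫⁻ x, ENNReal.ofReal (dist x₀ x ^ ζ) ∂(measAct P t ν) ≤ ENNReal.ofReal M) :
    Integrable (dist x₀ ·) μstar := by
  refine (lintegral_ofReal_ne_top_iff_integrable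
    (continuous_const.dist continuous_id).aestronglyMeasurable
    (ae_of_all _ fun _ => dist_nonneg)).1 (ne_top_of_le_ne_top ?_
      (hP.lintegral_dist_le_of_invariant hA3 hinv ν x₀ (B := 1 + ENNReal.ofReal M)
        fun t ht => ?_))
  · exact ENNReal.add_ne_top.2 ⟨ENNReal.one_ne_top, ENNReal.ofReal_ne_top⟩
  · have := hP.isProbabilityMeasure_measAct ht ν
    exact (lintegral_ofReal_le_one_add_lintegral_rpow hζ).trans (add_le_add_right (hM t ht) 1)

theorem abs_corrector_le (hP : IsMarkovSemigroup P) (hA3 : CondA3 P γ)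
    {μstar : Measure E} [IsProbabilityMeasure μstar]
    (hinv : ∀ t, 0 ≤ t → measAct P t μstar = μstar) {g : E → ℝ} {K : ℝ≥0}
    (hg : LipschitzWith K g) {C : ℝ} (hgC : ∀ x, |g x| ≤ C) (hmean : ∫ x, g x ∂μstar = 0)
    {x₀ : E} (hV : Integrable (dist x₀ ·) μstar) (x : E) :
    |corrector P g x| ≤ K / γ * dist x₀ x + K / γ * ∫ y, dist x₀ y ∂μstar := by
  have := abs_corrector_le_of_abs_funAct_le hA3.2.1 fun t ht =>
    (hP.abs_funAct_le_of_invariant hA3 hinv hg hgC hmean hV ht x).trans_eq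
      (mul_right_comm _ _ _)
  rw [mul_div_right_comm] at this
  linarith

end Contraction

end IsMarkovSemigroup

namespace IsMarkovProcess

variable {E : Type*} [MeasurableSpace E] {P : ℝ → E → Measure E} {Φ : ℝ → Ω → E}
  {m : Measure Ω} {ν : Measure E}

protected theorem measurable (hΦ : IsMarkovProcess P Φ m ν) (t : ℝ) : Measurable (Φ t) :=
  hΦ.jointMeas.comp (measurable_const.prodMk measurable_id)

theorem memLp_dist [MetricSpace E] [BorelSpace E] (hΦ : IsMarkovProcess P Φ m ν) {x₀ : E}
    {ζ M t : ℝ} (hζ : 0 < ζ) (ht : 0 ≤ t)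
    (hM : ∫⁻ x, ENNReal.ofReal (dist x₀ x ^ ζ) ∂(measAct P t ν) ≤ ENNReal.ofReal M) :
    MemLp (fun ω => dist x₀ (Φ t ω)) (ENNReal.ofReal ζ) m := by
  have hd : Continuous (dist x₀) := continuous_const.dist continuous_id
  rw [← hΦ.law t ht] at hM
  exact (memLp_map_measure_iff hd.aestronglyMeasurable (hΦ.measurable t).aemeasurable).1
    (memLp_ofReal_of_lintegral_rpow_ne_top hd.aestronglyMeasurable (fun _ => dist_nonneg) hζ
      (ne_top_of_le_ne_top ENNReal.ofReal_ne_top hM))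

end IsMarkovProcess

theorem martingale_part_moments_general
    (P : ℝ → X → Measure X) (hP : IsMarkovSemigroup P)
    (γ ζ : ℝ) (x₀ : X) (μ μstar : Measure X)
    [IsProbabilityMeasure μstar]
    (hA3 : CondA3 P γ) (hA4 : CondA4 P μ x₀ ζ)
    (hinv : ∀ t, 0 ≤ t → measAct P t μstar = μstar)
    (g : X → ℝ) (K : ℝ≥0) (hLip : LipschitzWith K g) (hBd : ∃ C, ∀ x, |g x| ≤ C)
    (hmean : ∫ x, g x ∂μstar = 0)
    (ν : Measure X) [IsProbabilityMeasure ν]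
    (hν : ∃ M : ℝ, ∀ t, 0 ≤ t →
      (∫⁻ x, ENNReal.ofReal (dist x₀ x ^ ζ) ∂(measAct P t ν)) ≤ ENNReal.ofReal M)
    (ℙν : Measure Ω) [IsProbabilityMeasure ℙν]
    (Φ : ℝ → Ω → X) (hΦ : IsMarkovProcess P Φ ℙν ν) :
    ∀ t : ℝ, 0 ≤ t →
      Integrable (fun ω => |mart P g Φ t ω| ^ ζ) ℙν ∧
      Integrable (fun ω => (mart P g Φ t ω) ^ 2) ℙν := by
  intro t ht
  obtain ⟨hζ, -⟩ := hA4
  obtain ⟨M, hM⟩ := hν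
  obtain ⟨C, hC⟩ := hBd
  have hVstar := hP.integrable_dist_of_invariant hA3 hinv ν (by linarith) hM
  have hχ s (hs : 0 ≤ s) : MemLp (fun ω => corrector P g (Φ s ω)) (ENNReal.ofReal ζ) ℙν :=
    (hΦ.memLp_dist (by linarith) hs (hM s hs)).comp_of_abs_le_mul_dist_add
      (hP.measurable_corrector hLip.continuous.stronglyMeasurable) (hΦ.measurable s)
      (hP.abs_corrector_le hA3 hinv hLip hC hmean hVstar)
  have hI : MemLp (addFun g Φ t) (ENNReal.ofReal ζ) ℙν :=
    .of_bound (measurable_addFun hΦ.jointMeas hLip.continuous.measurable t).aestronglyMeasurable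
      _ (ae_of_all _ (abs_addFun_le hC t))
  have hmart : MemLp (mart P g Φ t) (ENNReal.ofReal ζ) ℙν := ((hχ t ht).sub (hχ 0 le_rfl)).add hI
  refine ⟨?_, (hmart.mono_exponent ?_).integrable_sq⟩
  · simpa [ENNReal.toReal_ofReal (by linarith : 0 ≤ ζ)] using hmart.integrable_norm_rpow'
  · simpa using ENNReal.ofReal_le_ofReal hζ.le

/-- Lemma 3. Under (A2)–(A4), for an initial distribution `ν` with
uniformly bounded `ζ`-th moments along the semigroup (e.g. `ν = μ` or `ν = μ_*`),
`E_ν[|M_t(g)|^ζ] < ∞` for every `t ≥ 0`; in particular `M_t(g)` is square integrable. -/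
theorem martingale_part_moments
    (P : ℝ → X → Measure X) (hP : IsMarkovSemigroup P)
    (γ ζ : ℝ) (x₀ : X) (μ μstar : Measure X)
    [IsProbabilityMeasure μ] [IsProbabilityMeasure μstar]
    (hA2 : CondA2 P) (hA3 : CondA3 P γ) (hA4 : CondA4 P μ x₀ ζ)
    (hinv : ∀ t, 0 ≤ t → measAct P t μstar = μstar)
    (g : X → ℝ) (K : ℝ≥0) (hLip : LipschitzWith K g) (hBd : ∃ C, ∀ x, |g x| ≤ C)
    (hmean : ∫ x, g x ∂μstar = 0)
    (ν : Measure X) [IsProbabilityMeasure ν]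
    (hν : ∃ M : ℝ, ∀ t, 0 ≤ t →
      (∫⁻ x, ENNReal.ofReal (dist x₀ x ^ ζ) ∂(measAct P t ν)) ≤ ENNReal.ofReal M)
    (ℙν : Measure Ω) [IsProbabilityMeasure ℙν]
    (Φ : ℝ → Ω → X) (hΦ : IsMarkovProcess P Φ ℙν ν) :
    ∀ t : ℝ, 0 ≤ t →
      Integrable (fun ω => |mart P g Φ t ω| ^ ζ) ℙν ∧
      Integrable (fun ω => (mart P g Φ t ω) ^ 2) ℙν :=
  martingale_part_moments_general P hP γ ζ x₀ μ μstar hA3 hA4 hinv g K hLip hBd hmean ν hν ℙν Φ hΦ
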